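/- For any infinite compact Hausdorff space K, the space C_w(K) has property (B) and is not Fréchet–Urysohn. -/

import Mathlib

/-- A topological space `X` has property (B) if it can be covered by countably many closed
nowhere-dense sets `A n` such that every compact subset of `X` is contained in some `A n`. -/
def PropertyB (X : Type*) [TopologicalSpace X] : Prop :=
  ∃ A : ℕ → Set X,
    (∀ n, IsClosed (A n)) ∧ (∀ n, interior (A n) = ∅) ∧
    (⋃ n, A n) = Set.univ ∧
    ∀ C : Set X, IsCompact C → ∃ n, C ⊆ A n

/-- The weak topology on `C(K, ℝ)`: the coarsest topology making all continuous linear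
functionals on the Banach space `C(K)` continuous. -/
noncomputable def weakTopology (K : Type*) [TopologicalSpace K] [CompactSpace K] :
    TopologicalSpace C(K, ℝ) :=
  ⨅ μ : C(K, ℝ) →L[ℝ] ℝ, TopologicalSpace.induced μ inferInstance

/-!
The closed balls `B n` of radius `n` witness property (B): they are weakly closed by Hahn–Banach,
every weakly compact set lies in one of them by the uniform boundedness principle, and they have
empty weak interior because a weak neighbourhood contains a whole line `f + ℝ g`, with `g` in the
kernel of the finitely many functionals defining it (`C(K)` is infinite-dimensional).

For the failure of the Fréchet–Urysohn property, take bumps `f n` with disjoint supports and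
points `t k` with `f n (t k) = δ k n`. Signed sums of the `f n` have norm at most `1`, so
`∑ |μ (f n)| ≤ ‖μ‖` for every functional `μ`, and `f n → 0` weakly. Hence `0` lies in the weak
closure of `A = {f n + (n + 1) • f m | n < m}`. A sequence in `A` tending weakly to `0` is norm
bounded, and evaluating its terms at the points `t m` shows that the indices `n` stay below some
`N`; but the evaluations at `t 0, …, t N` tend to `0`, while each term takes the value `1` at `t n`.
-/

open Filter Function Topology Set

theorem exists_ne_zero_forall_apply_eq_zero {𝕜 M : Type*} [Field 𝕜] [AddCommGroup M]
    [Module 𝕜 M] (hM : ¬ FiniteDimensional 𝕜 M) {ι : Type*} [Finite ι] (μ : ι → M →ₗ[𝕜] 𝕜) :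
    ∃ g : M, g ≠ 0 ∧ ∀ i, μ i g = 0 := by
  by_contra! h
  refine hM (FiniteDimensional.of_injective (LinearMap.pi μ) ?_)
  rw [← LinearMap.ker_eq_bot, LinearMap.ker_eq_bot']
  intro g hg
  by_contra hg0
  obtain ⟨i, hi⟩ := h g hg0
  exact hi (congrFun hg i)

theorem not_finiteDimensional_of_biorthogonal {𝕜 M : Type*} [Field 𝕜] [AddCommGroup M]
    [Module 𝕜 M] {ι : Type*} [Infinite ι] [DecidableEq ι] {x : ι → M} {φ : ι → M →ₗ[𝕜] 𝕜}
    (hφx : ∀ k n, φ k (x n) = if k = n then 1 else 0) : ¬ FiniteDimensional 𝕜 M := by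
  intro hM
  refine Module.Finite.not_linearIndependent_of_infinite (R := 𝕜) x
    (linearIndependent_iff'.mpr ?_)
  intro s c hc k hk
  simpa [map_sum, hφx, hk] using congrArg (φ k) hc

/-- `weakTopology K` is definitionally `dualWeakTopology C(K, ℝ)`. -/
noncomputable def dualWeakTopology (E : Type*) [NormedAddCommGroup E] [NormedSpace ℝ E] :
    TopologicalSpace E :=
  ⨅ μ : E →L[ℝ] ℝ, TopologicalSpace.induced μ inferInstance

section DualWeakTopology

variable {E : Type*} [NormedAddCommGroup E] [NormedSpace ℝ E]

theorem continuous_dualWeakTopology (μ : E →L[ℝ] ℝ) : Continuous[dualWeakTopology E, _] μ :=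
  continuous_iInf_dom continuous_induced_dom

theorem tendsto_dualWeakTopology_iff {α : Type*} {l : Filter α} {u : α → E} {x : E} :
    Tendsto u l (@nhds E (dualWeakTopology E) x) ↔
      ∀ μ : E →L[ℝ] ℝ, Tendsto (fun a => μ (u a)) l (𝓝 (μ x)) := by
  rw [dualWeakTopology, _root_.nhds_iInf]
  simp only [nhds_induced, tendsto_iInf, tendsto_comap_iff]
  rfl

theorem isClosed_closedBall_dualWeakTopology {r : ℝ} (hr : 0 ≤ r) :
    IsClosed[dualWeakTopology E] (Metric.closedBall (0 : E) r) := by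
  have hball : Metric.closedBall (0 : E) r =
      ⋂ μ : E →L[ℝ] ℝ, μ ⁻¹' Metric.closedBall 0 (r * ‖μ‖) := by
    ext x
    simp only [mem_closedBall_zero_iff, mem_iInter, mem_preimage]
    exact ⟨fun hx μ => (μ.le_opNorm x).trans (by rw [mul_comm]; gcongr),
      NormedSpace.norm_le_dual_bound ℝ x hr⟩
  rw [hball]
  exact @isClosed_iInter _ _ (dualWeakTopology E) _ fun μ => @IsClosed.preimage _ _
    (dualWeakTopology E) _ _ (continuous_dualWeakTopology μ) _ Metric.isClosed_closedBall

theorem isBounded_of_isCompact_dualWeakTopology {C : Set E}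
    (hC : @IsCompact E (dualWeakTopology E) C) : Bornology.IsBounded C := by
  have hpointwise : ∀ μ : E →L[ℝ] ℝ, ∃ M, ∀ x : C,
      ‖NormedSpace.inclusionInDoubleDual ℝ E x μ‖ ≤ M := fun μ => by
    obtain ⟨M, hM⟩ := isBounded_iff_forall_norm_le.mp
      (@IsCompact.image _ _ (dualWeakTopology E) _ _ _ hC (continuous_dualWeakTopology μ)).isBounded
    exact ⟨M, fun x => hM _ (mem_image_of_mem μ x.2)⟩
  obtain ⟨M, hM⟩ := banach_steinhaus hpointwise
  refine isBounded_iff_forall_norm_le.mpr ⟨M, fun x hx => ?_⟩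
  rw [← (NormedSpace.inclusionInDoubleDualLi ℝ (E := E)).norm_map x]
  exact hM ⟨x, hx⟩

theorem exists_line_subset_of_mem_nhds_dualWeakTopology (hE : ¬ FiniteDimensional ℝ E)
    {s : Set E} {f : E} (hs : s ∈ @nhds E (dualWeakTopology E) f) :
    ∃ g : E, g ≠ 0 ∧ ∀ t : ℝ, f + t • g ∈ s := by
  rw [dualWeakTopology, _root_.nhds_iInf] at hs
  simp only [nhds_induced] at hs
  obtain ⟨I, hI, V, hV, rfl⟩ := mem_iInf.mp hs
  have := hI.to_subtype
  obtain ⟨g, hg, hker⟩ := exists_ne_zero_forall_apply_eq_zero hE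
    fun μ : I => ((μ : E →L[ℝ] ℝ) : E →ₗ[ℝ] ℝ)
  refine ⟨g, hg, fun t => mem_iInter.mpr fun μ => ?_⟩
  obtain ⟨W, hW, hWV⟩ := mem_comap.mp (hV μ)
  apply hWV
  simpa [show (μ : E →L[ℝ] ℝ) g = 0 from hker μ] using mem_of_mem_nhds hW

theorem not_isBounded_of_mem_nhds_dualWeakTopology (hE : ¬ FiniteDimensional ℝ E)
    {s : Set E} {f : E} (hs : s ∈ @nhds E (dualWeakTopology E) f) : ¬ Bornology.IsBounded s := by
  intro hbdd
  obtain ⟨g, hg, hline⟩ := exists_line_subset_of_mem_nhds_dualWeakTopology hE hs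
  obtain ⟨M, hM⟩ := isBounded_iff_forall_norm_le.mp hbdd
  have hgpos : 0 < ‖g‖ := norm_pos_iff.mpr hg
  have hM0 : 0 ≤ M := (norm_nonneg f).trans (by simpa using hM _ (hline 0))
  set t := (M + ‖f‖ + 1) / ‖g‖
  have htg : ‖t • g‖ = M + ‖f‖ + 1 := by
    rw [norm_smul, Real.norm_eq_abs, abs_of_nonneg (by positivity), div_mul_cancel₀ _ hgpos.ne']
  have := norm_sub_le (f + t • g) f
  rw [add_sub_cancel_left] at this
  linarith [hM _ (hline t)]

theorem interior_eq_empty_of_isBounded_dualWeakTopology (hE : ¬ FiniteDimensional ℝ E)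
    {s : Set E} (hs : Bornology.IsBounded s) : @interior E (dualWeakTopology E) s = ∅ :=
  eq_empty_of_forall_notMem fun _ hf => not_isBounded_of_mem_nhds_dualWeakTopology hE
    (@mem_interior_iff_mem_nhds _ (dualWeakTopology E) _ _ |>.mp hf) hs

theorem propertyB_dualWeakTopology (hE : ¬ FiniteDimensional ℝ E) :
    @PropertyB E (dualWeakTopology E) := by
  refine ⟨fun n => Metric.closedBall 0 n,
    fun n => isClosed_closedBall_dualWeakTopology n.cast_nonneg,
    fun n => interior_eq_empty_of_isBounded_dualWeakTopology hE Metric.isBounded_closedBall,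
    eq_univ_of_forall fun f => mem_iUnion.mpr ?_, fun C hC => ?_⟩
  · exact (exists_nat_ge ‖f‖).imp fun n hn => mem_closedBall_zero_iff.mpr hn
  · obtain ⟨M, hM⟩ := isBounded_iff_forall_norm_le.mp (isBounded_of_isCompact_dualWeakTopology hC)
    obtain ⟨n, hn⟩ := exists_nat_ge M
    exact ⟨n, fun x hx => mem_closedBall_zero_iff.mpr ((hM x hx).trans hn)⟩

theorem tendsto_dualWeakTopology_zero_of_norm_sum_le {x : ℕ → E} {C : ℝ}
    (hC : ∀ (F : Finset ℕ) (c : ℕ → ℝ), (∀ n, |c n| ≤ 1) → ‖∑ n ∈ F, c n • x n‖ ≤ C) :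
    Tendsto x atTop (@nhds E (dualWeakTopology E) 0) := by
  refine tendsto_dualWeakTopology_iff.mpr fun μ => ?_
  have hsum : ∀ N, ∑ n ∈ Finset.range N, |μ (x n)| ≤ ‖μ‖ * C := fun N => by
    calc ∑ n ∈ Finset.range N, |μ (x n)|
        = μ (∑ n ∈ Finset.range N, (SignType.sign (μ (x n)) : ℝ) • x n) := by
          simp [map_sum, sign_mul_self]
      _ ≤ ‖μ‖ * ‖∑ n ∈ Finset.range N, (SignType.sign (μ (x n)) : ℝ) • x n‖ :=
          (Real.le_norm_self _).trans (μ.le_opNorm _)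
      _ ≤ ‖μ‖ * C := by
          gcongr
          exact hC _ _ fun n => by cases SignType.sign (μ (x n)) <;> simp
  rw [map_zero]
  exact (summable_of_sum_range_le (fun n => abs_nonneg _) hsum).of_abs.tendsto_atTop_zero

theorem zero_mem_closure_dualWeakTopology {x : ℕ → E}
    (hx : Tendsto x atTop (@nhds E (dualWeakTopology E) 0)) :
    (0 : E) ∈ closure[dualWeakTopology E]
      {y | ∃ n m : ℕ, n < m ∧ x n + ((n : ℝ) + 1) • x m = y} := by
  set A := {y | ∃ n m : ℕ, n < m ∧ x n + ((n : ℝ) + 1) • x m = y}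
  have hxA : ∀ n, x n ∈ closure[dualWeakTopology E] A := fun n => by
    have hlim : Tendsto (fun m => x n + ((n : ℝ) + 1) • x m) atTop
        (@nhds E (dualWeakTopology E) (x n)) := by
      refine tendsto_dualWeakTopology_iff.mpr fun μ => ?_
      simpa using ((tendsto_dualWeakTopology_iff.mp hx μ).const_mul ((n : ℝ) + 1)).const_add
        (μ (x n))
    exact @mem_closure_of_tendsto _ (dualWeakTopology E) _ _ _ _ _ _ hlim
      ((eventually_gt_atTop n).mono fun m hm => ⟨n, m, hm, rfl⟩)
  rw [← @closure_closure _ (dualWeakTopology E)]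
  exact @mem_closure_of_tendsto _ (dualWeakTopology E) _ _ _ _ _ _ hx (Eventually.of_forall hxA)

theorem not_frechetUrysohnSpace_dualWeakTopology {x : ℕ → E} {φ : ℕ → E →L[ℝ] ℝ}
    (hx : Tendsto x atTop (@nhds E (dualWeakTopology E) 0)) (hφ : ∀ k, ‖φ k‖ ≤ 1)
    (hφx : ∀ k n, φ k (x n) = if k = n then 1 else 0) :
    ¬ @FrechetUrysohnSpace E (dualWeakTopology E) := by
  intro hFU
  obtain ⟨u, huA, hu⟩ := (@mem_closure_iff_seq_limit E (dualWeakTopology E) hFU _ _).mp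
    (zero_mem_closure_dualWeakTopology hx)
  choose n m hnm hum using huA
  have hφu : ∀ k j, φ k (u j) =
      (if k = n j then 1 else 0) + ((n j : ℝ) + 1) * if k = m j then 1 else 0 := by
    intro k j
    simp [← hum j, hφx]
  obtain ⟨M, hM⟩ := isBounded_iff_forall_norm_le.mp (isBounded_of_isCompact_dualWeakTopology
    (@Tendsto.isCompact_insert_range _ (dualWeakTopology E) _ _ hu))
  obtain ⟨N, hN⟩ := exists_nat_ge M
  have hnN : ∀ j, n j < N + 1 := fun j => by
    have hnorm : (n j : ℝ) + 1 ≤ ‖u j‖ := calc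
      (n j : ℝ) + 1 = φ (m j) (u j) := by simp [hφu, (hnm j).ne']
      _ ≤ ‖φ (m j)‖ * ‖u j‖ := (Real.le_norm_self _).trans ((φ (m j)).le_opNorm _)
      _ ≤ ‖u j‖ := mul_le_of_le_one_left (norm_nonneg _) (hφ _)
    have := hM (u j) (mem_insert_of_mem _ (mem_range_self j))
    exact_mod_cast (by linarith : (n j : ℝ) < N + 1)
  have hsmall : ∀ᶠ j in atTop, ∀ k ∈ Finset.range (N + 1), ‖φ k (u j)‖ < 1 := by
    refine (eventually_all_finset _).mpr fun k _ => ?_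
    have hk := (tendsto_dualWeakTopology_iff.mp hu (φ k)).norm
    rw [map_zero, norm_zero] at hk
    exact hk.eventually (gt_mem_nhds one_pos)
  obtain ⟨j, hj⟩ := hsmall.exists
  simpa [hφu, (hnm j).ne] using hj (n j) (Finset.mem_range.mpr (hnN j))

end DualWeakTopology

namespace ContinuousMap

variable {K : Type*} [TopologicalSpace K] [CompactSpace K]

theorem norm_sum_smul_le_one_of_disjoint_support {ι : Type*} {f : ι → C(K, ℝ)}
    (hf : ∀ n, ‖f n‖ ≤ 1) (hdisj : Pairwise (Disjoint on fun n => support (f n)))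
    (F : Finset ι) {c : ι → ℝ} (hc : ∀ n, |c n| ≤ 1) : ‖∑ n ∈ F, c n • f n‖ ≤ 1 := by
  refine (norm_le _ zero_le_one).mpr fun y => ?_
  simp only [coe_sum, coe_smul, Finset.sum_apply, Pi.smul_apply, smul_eq_mul]
  by_cases hy : ∃ n ∈ F, f n y ≠ 0
  · obtain ⟨n, hn, hny⟩ := hy
    have hother : ∀ k ∈ F, k ≠ n → c k * f k y = 0 := fun k _ hkn => by
      rw [(hdisj hkn).notMem_of_mem_right (mem_support.mpr hny) |> notMem_support.mp, mul_zero]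
    rw [Finset.sum_eq_single_of_mem n hn hother, norm_mul]
    exact mul_le_one₀ (hc n) (norm_nonneg _) ((norm_coe_le_norm _ y).trans (hf n))
  · push Not at hy
    rw [Finset.sum_eq_zero fun k hk => by rw [hy k hk, mul_zero]]
    simp

theorem exists_biorthogonal_bumps [T2Space K] [Infinite K] :
    ∃ (t : ℕ → K) (f : ℕ → C(K, ℝ)), (∀ n, ‖f n‖ ≤ 1) ∧
      Pairwise (Disjoint on fun n => support (f n)) ∧
      ∀ k n, f n (t k) = if k = n then 1 else 0 := by
  obtain ⟨U, hU, hUo, hUd⟩ := exists_seq_infinite_isOpen_pairwise_disjoint K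
  choose t ht using fun n => (hU n).nonempty
  choose f hf0 hf1 hf01 using fun n => exists_continuous_zero_one_of_isClosed
    (hUo n).isClosed_compl isClosed_singleton (disjoint_singleton_right.mpr (not_not_intro (ht n)))
  have hsupp : ∀ n, support (f n) ⊆ U n := fun n x hx =>
    by_contra fun h => hx (hf0 n h)
  refine ⟨t, f, fun n => (norm_le _ zero_le_one).mpr fun x => ?_,
    fun i j hij => (hUd hij).mono (hsupp i) (hsupp j), fun k n => ?_⟩
  · rw [Real.norm_eq_abs, abs_le]
    exact ⟨by linarith [(hf01 n x).1], (hf01 n x).2⟩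
  · split_ifs with h
    · subst h; exact hf1 k rfl
    · exact hf0 n ((hUd h).notMem_of_mem_left (ht k))

theorem exists_weaklyNull_biorthogonal [T2Space K] [Infinite K] :
    ∃ (f : ℕ → C(K, ℝ)) (φ : ℕ → C(K, ℝ) →L[ℝ] ℝ),
      Tendsto f atTop (@nhds _ (dualWeakTopology C(K, ℝ)) 0) ∧ (∀ k, ‖φ k‖ ≤ 1) ∧
      ∀ k n, φ k (f n) = if k = n then 1 else 0 := by
  obtain ⟨t, f, hf, hdisj, hft⟩ := exists_biorthogonal_bumps (K := K)
  refine ⟨f, fun k => evalCLM ℝ (t k), tendsto_dualWeakTopology_zero_of_norm_sum_le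
    fun F _ hc => norm_sum_smul_le_one_of_disjoint_support hf hdisj F hc, fun k => ?_, hft⟩
  exact ContinuousLinearMap.opNorm_le_bound _ zero_le_one fun g => by
    simpa using g.norm_coe_le_norm (t k)

end ContinuousMap

/-- For any infinite compact Hausdorff space `K`, the space `C_w(K)` has property (B)
and is not Fréchet–Urysohn. -/
theorem statement8 (K : Type*) [TopologicalSpace K] [CompactSpace K] [T2Space K] [Infinite K] :
    @PropertyB C(K, ℝ) (weakTopology K) ∧
      ¬ @FrechetUrysohnSpace C(K, ℝ) (weakTopology K) := by
  obtain ⟨f, φ, hf, hφ, hφf⟩ := ContinuousMap.exists_weaklyNull_biorthogonal (K := K)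
  exact ⟨propertyB_dualWeakTopology (not_finiteDimensional_of_biorthogonal
      (φ := fun k => (φ k : C(K, ℝ) →ₗ[ℝ] ℝ)) hφf),
    not_frechetUrysohnSpace_dualWeakTopology hf hφ hφf⟩
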